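/- Let Λ be an 𝒪-order in a finite-dimensional semisimple K-algebra A over a number field K, let 𝔭 be a maximal ideal of 𝒪, and let X, Y be Λ-lattices of equal 𝒪-rank n with pseudo-bases whose coefficient ideals have zero 𝔭-adic valuation; identify Hom_K(KX, KY) with Mat_{n×n}(K) via these bases. Let B_1, …, B_r ∈ Mat_{n×n}(𝒪_𝔭) be an 𝒪_𝔭-basis of Hom_{Λ_𝔭}(X_𝔭, Y_𝔭) and let B̄_i ∈ Mat_{n×n}(𝒪/𝔭) denote the reduction of B_i modulo 𝔭. Then X_𝔭 and Y_𝔭 are isomorphic as Λ_𝔭-modules if and only if there exists a tuple (b_1, …, b_r) ∈ (𝒪/𝔭)^r with det_{𝒪/𝔭}(b_1B̄_1 + ⋯ + b_rB̄_r) ≠ 0; moreover, if (b_1, …, b_r) is such a tuple and c_1, …, c_r ∈ 𝒪_𝔭 reduce to b_1, …, b_r modulo 𝔭, then c_1B_1 + ⋯ + c_rB_r is an isomorphism X_𝔭 → Y_𝔭. -/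

import Mathlib

/-!
Since the coefficient ideals are `𝔭`-adic units, `X_𝔭` and `Y_𝔭` are the free `𝒪_𝔭`-lattices
spanned by the two `K`-bases. An `𝒪_𝔭`-linear map between them is therefore bijective iff the
determinant of its matrix is a unit of the local ring `𝒪_𝔭`, i.e. iff that determinant is
nonzero modulo `𝔭`. Because `Λ` spans `A`, every `Λ_𝔭`-isomorphism `X_𝔭 → Y_𝔭` extends to an
`A`-linear map `KX → KY`, hence equals `c_1B_1 + ⋯ + c_rB_r` with `c_l ∈ 𝒪_𝔭`, and the reduction
of its matrix is `b_1B̄_1 + ⋯ + b_rB̄_r` with `b_l` the residue of `c_l`. Conversely, every tuple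
`(b_l)` lifts to `𝒪`.
-/

open Submodule Function

/-- A submodule is stable under (left multiplication by) a set `S` of operators. -/
def SetStable {A V R₀ : Type*} [Semiring R₀] [AddCommMonoid V] [Module R₀ V] [SMul A V]
    (S : Set A) (X : Submodule R₀ V) : Prop :=
  ∀ a ∈ S, ∀ x ∈ X, a • x ∈ X

/-- A linear map `f : X → Y` intertwines the action of every element of `S`. -/
def IsEquivMap {A V W R₀ : Type*} [Semiring R₀] [AddCommMonoid V] [AddCommMonoid W]
    [Module R₀ V] [Module R₀ W] [SMul A V] [SMul A W]
    (S : Set A) (X : Submodule R₀ V) (Y : Submodule R₀ W) (f : X →ₗ[R₀] Y) : Prop :=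
  ∀ a ∈ S, ∀ (v : V) (hv : v ∈ X) (hav : a • v ∈ X),
    ((f ⟨a • v, hav⟩ : Y) : W) = a • ((f ⟨v, hv⟩ : Y) : W)

/-- There exists an isomorphism of lattices, i.e. a bijective `R₀`-linear map
intertwining the action of every element of `S`. -/
def ExistsLatIso {A V W R₀ : Type*} [Semiring R₀] [AddCommMonoid V] [AddCommMonoid W]
    [Module R₀ V] [Module R₀ W] [SMul A V] [SMul A W]
    (S : Set A) (X : Submodule R₀ V) (Y : Submodule R₀ W) : Prop :=
  ∃ f : X →ₗ[R₀] Y, Function.Bijective f ∧ IsEquivMap S X Y f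

/-- `Λ` is an `𝒪`-order in the `K`-algebra `A`. -/
def IsOrder (𝒪 K A : Type*) [CommRing 𝒪] [Field K] [Ring A] [Algebra 𝒪 K] [Algebra K A]
    [Algebra 𝒪 A] (Λ : Subalgebra 𝒪 A) : Prop :=
  (Subalgebra.toSubmodule Λ).FG ∧ Submodule.span K (Λ : Set A) = ⊤

/-- The localization `𝒪_𝔭` of `𝒪` at a prime `𝔭`, realized as a subalgebra of the
fraction field `K`. -/
noncomputable def localizationAt (𝒪 K : Type*) [CommRing 𝒪] [IsDomain 𝒪] [Field K]
    [Algebra 𝒪 K] [IsFractionRing 𝒪 K] (𝔭 : Ideal 𝒪) (h𝔭 : 𝔭.IsPrime) : Subalgebra 𝒪 K :=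
  letI := h𝔭
  Localization.subalgebra K 𝔭.primeCompl
    (fun s hs => mem_nonZeroDivisors_of_ne_zero (fun h => hs (by simp [h])))

set_option synthInstance.maxHeartbeats 1000000
set_option maxHeartbeats 1000000

/-- `c ∈ K` reduces to `d ∈ 𝒪/𝔭` modulo `𝔭` (writing `c = u/s` with `s ∉ 𝔭`). -/
def ReducesTo {𝒪 K : Type*} [CommRing 𝒪] [Field K] [Algebra 𝒪 K]
    (𝔭 : Ideal 𝒪) (c : K) (d : 𝒪 ⧸ 𝔭) : Prop :=
  ∃ u s : 𝒪, s ∉ 𝔭 ∧ c * algebraMap 𝒪 K s = algebraMap 𝒪 K u ∧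
    Ideal.Quotient.mk 𝔭 u = d * Ideal.Quotient.mk 𝔭 s

section Localization

variable {𝒪 K : Type*} [CommRing 𝒪] [IsDomain 𝒪] [Field K] [Algebra 𝒪 K] [IsFractionRing 𝒪 K]
  (𝔭 : Ideal 𝒪)

instance (h𝔭 : 𝔭.IsPrime) : IsLocalization.AtPrime (localizationAt 𝒪 K 𝔭 h𝔭) 𝔭 := by
  unfold localizationAt; infer_instance

variable (K) in
noncomputable def localizationAt.residue (h𝔭 : 𝔭.IsMaximal) :
    localizationAt 𝒪 K 𝔭 h𝔭.isPrime →+* 𝒪 ⧸ 𝔭 :=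
  letI := Ideal.Quotient.field 𝔭
  IsLocalization.lift (M := 𝔭.primeCompl) (g := Ideal.Quotient.mk 𝔭)
    fun s => isUnit_iff_ne_zero.2 (Ideal.Quotient.eq_zero_iff_mem.not.2 s.2)

variable (h𝔭 : 𝔭.IsMaximal)

theorem localizationAt.residue_algebraMap (u : 𝒪) :
    localizationAt.residue K 𝔭 h𝔭 (algebraMap 𝒪 _ u) = Ideal.Quotient.mk 𝔭 u :=
  IsLocalization.lift_eq ..

instance : IsLocalHom (localizationAt.residue K 𝔭 h𝔭) := by
  refine ⟨fun c hc => ?_⟩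
  obtain ⟨⟨u, s⟩, hcs⟩ := IsLocalization.surj 𝔭.primeCompl c
  have hmk := congrArg (localizationAt.residue K 𝔭 h𝔭) hcs
  simp only [map_mul, localizationAt.residue_algebraMap] at hmk
  have hu : u ∈ 𝔭.primeCompl := by
    have hs : Ideal.Quotient.mk 𝔭 s ≠ 0 := Ideal.Quotient.eq_zero_iff_mem.not.2 s.2
    rw [Ideal.mem_primeCompl_iff, ← Ideal.Quotient.eq_zero_iff_mem, ← hmk]
    exact mul_ne_zero hc.ne_zero hs
  exact isUnit_of_mul_isUnit_left (hcs ▸ IsLocalization.map_units _ ⟨u, hu⟩)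

theorem localizationAt.residue_eq_of_reducesTo {c : localizationAt 𝒪 K 𝔭 h𝔭.isPrime}
    {d : 𝒪 ⧸ 𝔭} (h : ReducesTo 𝔭 (c : K) d) : localizationAt.residue K 𝔭 h𝔭 c = d := by
  obtain ⟨u, s, hs, hK, hd⟩ := h
  have hR : c * algebraMap 𝒪 _ s = algebraMap 𝒪 _ u := Subtype.val_injective hK
  have hmk := congrArg (localizationAt.residue K 𝔭 h𝔭) hR
  rw [map_mul, localizationAt.residue_algebraMap, localizationAt.residue_algebraMap, hd] at hmk
  exact mul_right_cancel₀ (Ideal.Quotient.eq_zero_iff_mem.not.2 hs) hmk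

end Localization

section Determinant

open LinearMap

variable {R M M' ι : Type*} [CommRing R] [AddCommGroup M] [Module R M] [AddCommGroup M']
  [Module R M'] [Fintype ι] [DecidableEq ι] (v : Module.Basis ι R M) (v' : Module.Basis ι R M')

theorem LinearMap.bijective_iff_isUnit_det_toMatrix (f : M →ₗ[R] M') :
    Bijective f ↔ IsUnit (toMatrix v v' f).det :=
  ⟨fun h => (LinearEquiv.ofBijective f h).isUnit_det v v',
    fun h => (LinearEquiv.ofIsUnitDet h).bijective⟩

theorem bijective_sum_smul_iff_det_ne_zero {k κ : Type*} [Field k] [Fintype κ]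
    (ρ : R →+* k) [IsLocalHom ρ] (φ : κ → M →ₗ[R] M') (φbar : κ → Matrix ι ι k)
    (hφ : ∀ l, ρ.mapMatrix (toMatrix v v' (φ l)) = φbar l) (c : κ → R) :
    Bijective ⇑(∑ l, c l • φ l) ↔ (∑ l, ρ (c l) • φbar l).det ≠ 0 := by
  have hred : ρ.mapMatrix (toMatrix v v' (∑ l, c l • φ l)) = ∑ l, ρ (c l) • φbar l := by
    ext i j
    simp [← hφ, Matrix.sum_apply]
  rw [bijective_iff_isUnit_det_toMatrix v v', ← isUnit_map_iff ρ, RingHom.map_det, hred,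
    isUnit_iff_ne_zero]

end Determinant

theorem LinearMap.bijOn_iff_bijective_restrict {R M N : Type*} [Semiring R] [AddCommMonoid M]
    [Module R M] [AddCommMonoid N] [Module R N] (f : M →ₗ[R] N) {p : Submodule R M}
    {q : Submodule R N} (hf : ∀ x ∈ p, f x ∈ q) :
    Set.BijOn f p q ↔ Bijective (f.restrict hf) :=
  ⟨fun h => h.bijective, fun h => ⟨hf, (Set.MapsTo.restrict_inj hf).1 h.1,
    (Set.MapsTo.restrict_surjective_iff hf).1 h.2⟩⟩

section Lattice

variable {𝒪 K V W : Type*} [CommRing 𝒪] [Field K] [Algebra 𝒪 K] (R : Subalgebra 𝒪 K)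
  [AddCommGroup V] [Module K V] [AddCommGroup W] [Module K W]

theorem span_iSup_map_toSpanSingleton [Module 𝒪 V] [IsScalarTower 𝒪 K V] {ι : Type*}
    (b : ι → V) (𝔞 : ι → Submodule 𝒪 K) (h𝔞 : ∀ i, span R (𝔞 i : Set K) = span R {1}) :
    span R (↑(⨆ i, (𝔞 i).map ((LinearMap.toSpanSingleton K V (b i)).restrictScalars 𝒪)) :
      Set V) = span R (Set.range b) := by
  rw [Submodule.iSup_eq_span, Submodule.span_span_of_tower, Submodule.span_iUnion,
    Submodule.span_range_eq_iSup]
  refine iSup_congr fun i => ?_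
  let g := (LinearMap.toSpanSingleton K V (b i)).restrictScalars R
  change span R (g '' (𝔞 i : Set K)) = _
  rw [← Submodule.map_span, h𝔞 i, Submodule.map_span, Set.image_singleton]
  simp [g]

theorem SetStable.span {A : Type*} [Ring A] [Algebra K A] [Module A V] [IsScalarTower K A V]
    [Module 𝒪 V] {S : Set A} {X : Submodule 𝒪 V} (hX : SetStable S X) :
    SetStable S (span R (X : Set V)) := by
  intro a ha x hx
  have := Submodule.mem_map_of_mem (f := DistribSMul.toLinearMap R V a) hx
  rw [Submodule.map_span] at this
  refine span_mono ?_ this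
  rintro _ ⟨y, hy, rfl⟩
  exact hX a ha y hy

variable {ι : Type*}

theorem Module.Basis.exists_linearMap_eq_on_span (b : Module.Basis ι K V)
    (f : span R (Set.range b) →ₗ[R] W) :
    ∃ F : V →ₗ[K] W, ∀ x : span R (Set.range b), F x = f x := by
  let F := b.constr K fun i => f (b.restrictScalars R i)
  refine ⟨F, LinearMap.congr_fun ((b.restrictScalars R).ext
    (f₁ := (F.restrictScalars R).comp (span R (Set.range b)).subtype) fun i => ?_)⟩
  simp [F]

theorem LinearMap.map_smul_of_forall_basis {A : Type*} [Ring A] [Algebra K A] [Module A V]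
    [IsScalarTower K A V] [Module A W] [IsScalarTower K A W] {S : Set A}
    (hS : span K S = ⊤) (b : Module.Basis ι K V) (F : V →ₗ[K] W)
    (hF : ∀ a ∈ S, ∀ i, F (a • b i) = a • F (b i)) (a : A) (v : V) :
    F (a • v) = a • F v := by
  have hSv : ∀ a ∈ S, F (a • v) = a • F v := fun a ha =>
    LinearMap.congr_fun (b.ext (f₁ := F ∘ₗ DistribSMul.toLinearMap K V a)
      (f₂ := DistribSMul.toLinearMap K W a ∘ₗ F) (hF a ha)) v
  exact LinearMap.congr_fun (LinearMap.ext_on hS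
    (f := F ∘ₗ (LinearMap.toSpanSingleton A V v).restrictScalars K)
    (g := (LinearMap.toSpanSingleton A W (F v)).restrictScalars K) hSv) a

theorem existsLatIso_iff_exists_bijOn {A : Type*} [Ring A] [Algebra K A] [Module A V]
    [IsScalarTower K A V] [Module A W] [IsScalarTower K A W] {S : Set A}
    (hS : span K S = ⊤) (b : Module.Basis ι K V) (hL : SetStable S (span R (Set.range b)))
    (L' : Submodule R W) :
    ExistsLatIso S (span R (Set.range b)) L' ↔
      ∃ F : V →ₗ[K] W, (∀ (a : A) (v : V), F (a • v) = a • F v) ∧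
        Set.BijOn F (span R (Set.range b)) L' := by
  constructor
  · rintro ⟨f, hfbij, hfeq⟩
    obtain ⟨F, hF⟩ := b.exists_linearMap_eq_on_span R (L'.subtype ∘ₗ f)
    have hmem : ∀ i, b i ∈ span R (Set.range b) := fun i => subset_span (Set.mem_range_self i)
    have hFeq := LinearMap.map_smul_of_forall_basis hS b F fun a ha i => by
      rw [hF ⟨_, hL a ha _ (hmem i)⟩, hF ⟨_, hmem i⟩]
      exact hfeq a ha _ (hmem i) _
    have hmaps : ∀ x ∈ span R (Set.range b), F.restrictScalars R x ∈ L' := fun x hx =>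
      (hF ⟨x, hx⟩).symm ▸ (f ⟨x, hx⟩).2
    refine ⟨F, hFeq, (LinearMap.bijOn_iff_bijective_restrict _ hmaps).2 ?_⟩
    convert hfbij using 1
    ext x
    exact hF x
  · rintro ⟨F, hFeq, hF⟩
    exact ⟨(F.restrictScalars R).restrict hF.mapsTo,
      (LinearMap.bijOn_iff_bijective_restrict _ _).1 hF, fun a _ v _ _ => hFeq a v⟩

theorem LinearMap.map_smul_sum_smul {A κ : Type*} [Ring A] [Algebra K A] [Module A V]
    [IsScalarTower K A V] [Module A W] [IsScalarTower K A W] [Fintype κ] (B : κ → V →ₗ[K] W)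
    (hB : ∀ l (a : A) v, B l (a • v) = a • B l v) (c : κ → K) (a : A) (v : V) :
    (∑ l, c l • B l) (a • v) = a • (∑ l, c l • B l) v := by
  simp only [LinearMap.sum_apply, LinearMap.smul_apply, hB, Finset.smul_sum]
  exact Finset.sum_congr rfl fun l _ => smul_comm _ _ _

variable [Fintype ι] [DecidableEq ι] (bV : Module.Basis ι K V) (bW : Module.Basis ι K W)

theorem LinearMap.toMatrix_restrict_restrictScalars (f : V →ₗ[K] W)
    (hf : ∀ x ∈ span R (Set.range bV), f x ∈ span R (Set.range bW)) :
    (algebraMap R K).mapMatrix (toMatrix (bV.restrictScalars R) (bW.restrictScalars R)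
      ((f.restrictScalars R).restrict hf)) = toMatrix bV bW f := by
  ext i j
  simp only [RingHom.mapMatrix_apply, Matrix.map_apply, toMatrix_apply,
    Module.Basis.restrictScalars_repr_apply]
  exact congrArg (fun x => bW.repr (f x) i) (bV.restrictScalars_apply R j)

theorem bijOn_sum_smul_iff_det_ne_zero {k κ : Type*} [Field k] [Fintype κ]
    (ρ : R →+* k) [IsLocalHom ρ] (B : κ → V →ₗ[K] W)
    (hB : ∀ l, ∀ x ∈ span R (Set.range bV), B l x ∈ span R (Set.range bW))
    (Bbar : κ → Matrix ι ι k)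
    (hBbar : ∀ l, ρ.mapMatrix (LinearMap.toMatrix (bV.restrictScalars R) (bW.restrictScalars R)
      (((B l).restrictScalars R).restrict (hB l))) = Bbar l) (c : κ → R) :
    Set.BijOn ⇑(∑ l, (c l : K) • B l) (span R (Set.range bV)) (span R (Set.range bW)) ↔
      (∑ l, ρ (c l) • Bbar l).det ≠ 0 := by
  have hmaps : ∀ x ∈ span R (Set.range bV),
      (∑ l, (c l : K) • B l).restrictScalars R x ∈ span R (Set.range bW) := fun x hx => by
    rw [LinearMap.coe_restrictScalars, LinearMap.sum_apply]
    exact sum_mem fun l _ => Submodule.smul_mem _ (c l) (hB l x hx)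
  refine (LinearMap.bijOn_iff_bijective_restrict _ hmaps).trans ?_
  rw [← bijective_sum_smul_iff_det_ne_zero _ _ ρ _ Bbar hBbar c]
  convert Iff.rfl using 2
  ext x
  simp only [LinearMap.restrict_apply, LinearMap.coe_sum, Finset.sum_apply, coe_sum,
    Submodule.coe_smul, LinearMap.coe_restrictScalars, LinearMap.smul_apply]
  rfl

end Lattice

theorem localizationAt.residue_mapMatrix_toMatrix {𝒪 K V W ι : Type*} [CommRing 𝒪] [IsDomain 𝒪]
    [Field K] [Algebra 𝒪 K] [IsFractionRing 𝒪 K] (𝔭 : Ideal 𝒪) (h𝔭 : 𝔭.IsMaximal)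
    [AddCommGroup V] [Module K V] [AddCommGroup W] [Module K W] [Fintype ι] [DecidableEq ι]
    (bV : Module.Basis ι K V) (bW : Module.Basis ι K W) (f : V →ₗ[K] W)
    (hf : ∀ x ∈ span (localizationAt 𝒪 K 𝔭 h𝔭.isPrime) (Set.range bV),
      f x ∈ span (localizationAt 𝒪 K 𝔭 h𝔭.isPrime) (Set.range bW))
    {fbar : Matrix ι ι (𝒪 ⧸ 𝔭)}
    (h : ∀ i j, ReducesTo 𝔭 (LinearMap.toMatrix bV bW f i j) (fbar i j)) :
    (localizationAt.residue K 𝔭 h𝔭).mapMatrix (LinearMap.toMatrix (bV.restrictScalars _)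
      (bW.restrictScalars _) ((f.restrictScalars _).restrict hf)) = fbar := by
  ext i j
  refine localizationAt.residue_eq_of_reducesTo 𝔭 h𝔭 ?_
  have hij := h i j
  rw [← congrFun₂ (LinearMap.toMatrix_restrict_restrictScalars _ bV bW f hf) i j] at hij
  exact hij

theorem stmt_17_general
    (K : Type*) [Field K] [NumberField K]
    (A : Type*) [Ring A] [Algebra K A]
    [Algebra (NumberField.RingOfIntegers K) A]
    (Λ : Subalgebra (NumberField.RingOfIntegers K) A)
    (hΛ : IsOrder (NumberField.RingOfIntegers K) K A Λ)
    (V : Type*) [AddCommGroup V] [Module K V] [Module A V] [IsScalarTower K A V]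
    [Module (NumberField.RingOfIntegers K) V] [IsScalarTower (NumberField.RingOfIntegers K) K V]
    (W : Type*) [AddCommGroup W] [Module K W] [Module A W] [IsScalarTower K A W]
    [Module (NumberField.RingOfIntegers K) W] [IsScalarTower (NumberField.RingOfIntegers K) K W]
    (𝔭 : Ideal (NumberField.RingOfIntegers K)) (h𝔭 : 𝔭.IsMaximal)
    (n : ℕ) (bα : Module.Basis (Fin n) K V) (bβ : Module.Basis (Fin n) K W)
    -- the coefficient ideals: fractional ideals of `K` with `v_𝔭 = 0`
    (𝔞 𝔟 : Fin n → Submodule (NumberField.RingOfIntegers K) K)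
    (h𝔞val : ∀ i, Submodule.span (localizationAt (NumberField.RingOfIntegers K) K 𝔭 h𝔭.isPrime)
        ((𝔞 i : Set K)) =
      Submodule.span (localizationAt (NumberField.RingOfIntegers K) K 𝔭 h𝔭.isPrime) {(1 : K)})
    (h𝔟val : ∀ i, Submodule.span (localizationAt (NumberField.RingOfIntegers K) K 𝔭 h𝔭.isPrime)
        ((𝔟 i : Set K)) =
      Submodule.span (localizationAt (NumberField.RingOfIntegers K) K 𝔭 h𝔭.isPrime) {(1 : K)})
    -- the `Λ`-lattices `X` and `Y` with the given pseudo-bases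
    (X : Submodule (NumberField.RingOfIntegers K) V)
    (hXst : SetStable (Λ : Set A) X)
    (hXdec : X = ⨆ i : Fin n, Submodule.map
      ((LinearMap.toSpanSingleton K V (bα i)).restrictScalars (NumberField.RingOfIntegers K))
      (𝔞 i))
    (Y : Submodule (NumberField.RingOfIntegers K) W)
    (hYdec : Y = ⨆ i : Fin n, Submodule.map
      ((LinearMap.toSpanSingleton K W (bβ i)).restrictScalars (NumberField.RingOfIntegers K))
      (𝔟 i))
    -- `B_1, …, B_r` : an `𝒪_𝔭`-basis of `Hom_{Λ_𝔭}(X_𝔭, Y_𝔭)` with entries in `𝒪_𝔭`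
    (r : ℕ) (B : Fin r → (V →ₗ[K] W))
    (hBequiv : ∀ l : Fin r, ∀ (a : A) (v : V), (B l) (a • v) = a • (B l) v)
    (hBmaps : ∀ l : Fin r,
      ∀ v ∈ Submodule.span (localizationAt (NumberField.RingOfIntegers K) K 𝔭 h𝔭.isPrime)
        (X : Set V),
      (B l) v ∈ Submodule.span (localizationAt (NumberField.RingOfIntegers K) K 𝔭 h𝔭.isPrime)
        (Y : Set W))
    (hBspan : ∀ f : V →ₗ[K] W,
      (∀ (a : A) (v : V), f (a • v) = a • f v) →
      (∀ v ∈ Submodule.span (localizationAt (NumberField.RingOfIntegers K) K 𝔭 h𝔭.isPrime)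
          (X : Set V),
        f v ∈ Submodule.span (localizationAt (NumberField.RingOfIntegers K) K 𝔭 h𝔭.isPrime)
          (Y : Set W)) →
      f ∈ Submodule.span (localizationAt (NumberField.RingOfIntegers K) K 𝔭 h𝔭.isPrime)
        (Set.range B))
    -- `B̄_1, …, B̄_r` : the reductions of the `B_i` modulo `𝔭`
    (Bbar : Fin r → Matrix (Fin n) (Fin n) (NumberField.RingOfIntegers K ⧸ 𝔭))
    (hred : ∀ (l : Fin r) (i j : Fin n),
      ReducesTo 𝔭 (LinearMap.toMatrix bα bβ (B l) i j) (Bbar l i j)) :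
    -- `X_𝔭 ≅ Y_𝔭` iff some `𝒪/𝔭`-combination of the `B̄_i` has nonzero determinant
    ((ExistsLatIso (Λ : Set A)
        (Submodule.span (localizationAt (NumberField.RingOfIntegers K) K 𝔭 h𝔭.isPrime)
          (X : Set V))
        (Submodule.span (localizationAt (NumberField.RingOfIntegers K) K 𝔭 h𝔭.isPrime)
          (Y : Set W))) ↔
      (∃ b : Fin r → (NumberField.RingOfIntegers K ⧸ 𝔭),
        Matrix.det (∑ l, b l • Bbar l) ≠ 0)) ∧
    -- moreover `c_1B_1 + ⋯ + c_rB_r` is then an isomorphism `X_𝔭 → Y_𝔭`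
    (∀ b : Fin r → (NumberField.RingOfIntegers K ⧸ 𝔭),
      Matrix.det (∑ l, b l • Bbar l) ≠ 0 →
      ∀ c : Fin r → K,
        (∀ l : Fin r, c l ∈ localizationAt (NumberField.RingOfIntegers K) K 𝔭 h𝔭.isPrime ∧
          ReducesTo 𝔭 (c l) (b l)) →
        Set.BijOn (⇑(∑ l, c l • B l))
          (Submodule.span (localizationAt (NumberField.RingOfIntegers K) K 𝔭 h𝔭.isPrime)
            (X : Set V) : Set V)
          (Submodule.span (localizationAt (NumberField.RingOfIntegers K) K 𝔭 h𝔭.isPrime)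
            (Y : Set W) : Set W)) := by
  let := Ideal.Quotient.field 𝔭
  set R := localizationAt (NumberField.RingOfIntegers K) K 𝔭 h𝔭.isPrime
  set ρ := localizationAt.residue K 𝔭 h𝔭
  have hXR : span R (X : Set V) = span R (Set.range bα) :=
    hXdec ▸ span_iSup_map_toSpanSingleton R bα 𝔞 h𝔞val
  have hYR : span R (Y : Set W) = span R (Set.range bβ) :=
    hYdec ▸ span_iSup_map_toSpanSingleton R bβ 𝔟 h𝔟val
  have hXΛ : SetStable (Λ : Set A) (span R (Set.range bα)) := hXR ▸ hXst.span R
  rw [hXR, hYR] at hBmaps hBspan ⊢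
  have key := bijOn_sum_smul_iff_det_ne_zero R bα bβ ρ B hBmaps Bbar fun l =>
    localizationAt.residue_mapMatrix_toMatrix 𝔭 h𝔭 bα bβ (B l) (hBmaps l) (hred l)
  have hiso := existsLatIso_iff_exists_bijOn R hΛ.2 bα hXΛ (span R (Set.range bβ))
  refine ⟨⟨fun hXY => ?_, fun ⟨b, hb⟩ => ?_⟩, fun b hb c hc => ?_⟩
  · obtain ⟨F, hFeq, hF⟩ := hiso.1 hXY
    obtain ⟨c, rfl⟩ := mem_span_range_iff_exists_fun R |>.1 (hBspan F hFeq hF.mapsTo)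
    exact ⟨fun l => ρ (c l), (key c).1 hF⟩
  · choose u hu using fun l => Ideal.Quotient.mk_surjective (b l)
    let c : Fin r → R := fun l => algebraMap _ R (u l)
    have hρc : ∀ l, ρ (c l) = b l :=
      fun l => (localizationAt.residue_algebraMap 𝔭 h𝔭 (u l)).trans (hu l)
    refine hiso.2 ⟨_, LinearMap.map_smul_sum_smul B hBequiv _, (key c).2 ?_⟩
    simpa only [hρc] using hb
  · have hρc : ∀ l, ρ ⟨c l, (hc l).1⟩ = b l :=
      fun l => localizationAt.residue_eq_of_reducesTo 𝔭 h𝔭 (hc l).2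
    exact (key fun l => ⟨c l, (hc l).1⟩).2 (by simpa only [hρc] using hb)

/-- Let `B_1, …, B_r ∈ Mat_{n×n}(𝒪_𝔭)` be an `𝒪_𝔭`-basis of
`Hom_{Λ_𝔭}(X_𝔭, Y_𝔭)` and `B̄_i` their reductions mod `𝔭`.  Then `X_𝔭 ≅ Y_𝔭` as
`Λ_𝔭`-modules iff `det(b_1B̄_1 + ⋯ + b_rB̄_r) ≠ 0` for some `(b_i) ∈ (𝒪/𝔭)^r`; and if
`c_1, …, c_r ∈ 𝒪_𝔭` reduce to such `b_1, …, b_r`, then `c_1B_1 + ⋯ + c_rB_r` is an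
isomorphism `X_𝔭 → Y_𝔭`. -/
theorem stmt_17
    (K : Type*) [Field K] [NumberField K]
    (A : Type*) [Ring A] [Algebra K A] [FiniteDimensional K A] [IsSemisimpleRing A]
    [Algebra (NumberField.RingOfIntegers K) A] [IsScalarTower (NumberField.RingOfIntegers K) K A]
    (Λ : Subalgebra (NumberField.RingOfIntegers K) A)
    (hΛ : IsOrder (NumberField.RingOfIntegers K) K A Λ)
    (V : Type*) [AddCommGroup V] [Module K V] [Module A V] [IsScalarTower K A V]
    [Module (NumberField.RingOfIntegers K) V] [IsScalarTower (NumberField.RingOfIntegers K) K V]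
    (W : Type*) [AddCommGroup W] [Module K W] [Module A W] [IsScalarTower K A W]
    [Module (NumberField.RingOfIntegers K) W] [IsScalarTower (NumberField.RingOfIntegers K) K W]
    (𝔭 : Ideal (NumberField.RingOfIntegers K)) (h𝔭 : 𝔭.IsMaximal)
    (n : ℕ) (bα : Module.Basis (Fin n) K V) (bβ : Module.Basis (Fin n) K W)
    -- the coefficient ideals: fractional ideals of `K` with `v_𝔭 = 0`
    (𝔞 𝔟 : Fin n → Submodule (NumberField.RingOfIntegers K) K)
    (h𝔞fg : ∀ i, (𝔞 i).FG) (h𝔞ne : ∀ i, 𝔞 i ≠ ⊥)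
    (h𝔟fg : ∀ i, (𝔟 i).FG) (h𝔟ne : ∀ i, 𝔟 i ≠ ⊥)
    (h𝔞val : ∀ i, Submodule.span (localizationAt (NumberField.RingOfIntegers K) K 𝔭 h𝔭.isPrime)
        ((𝔞 i : Set K)) =
      Submodule.span (localizationAt (NumberField.RingOfIntegers K) K 𝔭 h𝔭.isPrime) {(1 : K)})
    (h𝔟val : ∀ i, Submodule.span (localizationAt (NumberField.RingOfIntegers K) K 𝔭 h𝔭.isPrime)
        ((𝔟 i : Set K)) =
      Submodule.span (localizationAt (NumberField.RingOfIntegers K) K 𝔭 h𝔭.isPrime) {(1 : K)})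
    -- the `Λ`-lattices `X` and `Y` with the given pseudo-bases
    (X : Submodule (NumberField.RingOfIntegers K) V)
    (hXfg : X.FG) (hXst : SetStable (Λ : Set A) X)
    (hXdec : X = ⨆ i : Fin n, Submodule.map
      ((LinearMap.toSpanSingleton K V (bα i)).restrictScalars (NumberField.RingOfIntegers K))
      (𝔞 i))
    (Y : Submodule (NumberField.RingOfIntegers K) W)
    (hYfg : Y.FG) (hYst : SetStable (Λ : Set A) Y)
    (hYdec : Y = ⨆ i : Fin n, Submodule.map
      ((LinearMap.toSpanSingleton K W (bβ i)).restrictScalars (NumberField.RingOfIntegers K))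
      (𝔟 i))
    -- `B_1, …, B_r` : an `𝒪_𝔭`-basis of `Hom_{Λ_𝔭}(X_𝔭, Y_𝔭)` with entries in `𝒪_𝔭`
    (r : ℕ) (B : Fin r → (V →ₗ[K] W))
    (hBequiv : ∀ l : Fin r, ∀ (a : A) (v : V), (B l) (a • v) = a • (B l) v)
    (hBmat : ∀ l : Fin r, ∀ i j : Fin n, LinearMap.toMatrix bα bβ (B l) i j ∈
      localizationAt (NumberField.RingOfIntegers K) K 𝔭 h𝔭.isPrime)
    (hBmaps : ∀ l : Fin r,
      ∀ v ∈ Submodule.span (localizationAt (NumberField.RingOfIntegers K) K 𝔭 h𝔭.isPrime)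
        (X : Set V),
      (B l) v ∈ Submodule.span (localizationAt (NumberField.RingOfIntegers K) K 𝔭 h𝔭.isPrime)
        (Y : Set W))
    (hBindep : LinearIndependent (localizationAt (NumberField.RingOfIntegers K) K 𝔭 h𝔭.isPrime) B)
    (hBspan : ∀ f : V →ₗ[K] W,
      (∀ (a : A) (v : V), f (a • v) = a • f v) →
      (∀ v ∈ Submodule.span (localizationAt (NumberField.RingOfIntegers K) K 𝔭 h𝔭.isPrime)
          (X : Set V),
        f v ∈ Submodule.span (localizationAt (NumberField.RingOfIntegers K) K 𝔭 h𝔭.isPrime)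
          (Y : Set W)) →
      f ∈ Submodule.span (localizationAt (NumberField.RingOfIntegers K) K 𝔭 h𝔭.isPrime)
        (Set.range B))
    -- `B̄_1, …, B̄_r` : the reductions of the `B_i` modulo `𝔭`
    (Bbar : Fin r → Matrix (Fin n) (Fin n) (NumberField.RingOfIntegers K ⧸ 𝔭))
    (hred : ∀ (l : Fin r) (i j : Fin n),
      ReducesTo 𝔭 (LinearMap.toMatrix bα bβ (B l) i j) (Bbar l i j)) :
    -- `X_𝔭 ≅ Y_𝔭` iff some `𝒪/𝔭`-combination of the `B̄_i` has nonzero determinant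
    ((ExistsLatIso (Λ : Set A)
        (Submodule.span (localizationAt (NumberField.RingOfIntegers K) K 𝔭 h𝔭.isPrime)
          (X : Set V))
        (Submodule.span (localizationAt (NumberField.RingOfIntegers K) K 𝔭 h𝔭.isPrime)
          (Y : Set W))) ↔
      (∃ b : Fin r → (NumberField.RingOfIntegers K ⧸ 𝔭),
        Matrix.det (∑ l, b l • Bbar l) ≠ 0)) ∧
    -- moreover `c_1B_1 + ⋯ + c_rB_r` is then an isomorphism `X_𝔭 → Y_𝔭`
    (∀ b : Fin r → (NumberField.RingOfIntegers K ⧸ 𝔭),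
      Matrix.det (∑ l, b l • Bbar l) ≠ 0 →
      ∀ c : Fin r → K,
        (∀ l : Fin r, c l ∈ localizationAt (NumberField.RingOfIntegers K) K 𝔭 h𝔭.isPrime ∧
          ReducesTo 𝔭 (c l) (b l)) →
        Set.BijOn (⇑(∑ l, c l • B l))
          (Submodule.span (localizationAt (NumberField.RingOfIntegers K) K 𝔭 h𝔭.isPrime)
            (X : Set V) : Set V)
          (Submodule.span (localizationAt (NumberField.RingOfIntegers K) K 𝔭 h𝔭.isPrime)
            (Y : Set W) : Set W)) :=
  stmt_17_general K A Λ hΛ V W 𝔭 h𝔭 n bα bβ 𝔞 𝔟 h𝔞val h𝔟val X hXst hXdec Y hYdec r B hBequiv hBmaps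
    hBspan Bbar hred
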